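/- arXiv:0711.3983 — 3 statements merged into one kernel-verified Lean document; each statement's English description precedes it below -/
import Mathlib

section
/- Let m ≥ 1 and let G = C₄ᵐ × C₂ with generators a₁,…,a_m of the order-4 factors and h of the order-2 factor. In 𝔽₂[G], let u_m = ∏_{i=1}^{m} (a_i + a_i² + a_i³) and u = 1 + h·u_m. Then the 𝔽₂-linear endomorphism of 𝔽₂[G] given by multiplication by u has range of dimension 4ᵐ (that is, u has rank 4ᵐ = |G|/2). -/
/-!
Since `h² = 1` and `(a + a² + a³)² = a² + a⁴ + a⁶ = 1` for `a⁴ = 1` in characteristic 2, the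
element `w = h·u_m` squares to `1`, so `u = 1 + w` squares to `0` and the range of
multiplication by `u` lies in its kernel; hence the rank is at most `|G|/2`. Conversely `w` is
supported on the odd coset of the index-2 subgroup `N = C₄ᵐ`, so for `x` supported on `N` the
product `x·u = x + x·w` splits into its `N`-part `x` and its odd part `x·w`: multiplication by
`u` is injective on the `|G|/2`-dimensional space `𝔽₂[N]`.
-/

noncomputable section

open MonoidAlgebra

/-- The code generated by `u` in a group algebra: the `R`-span of `{g • u : g ∈ G}`. -/
def codeGen {R : Type*} [CommSemiring R] {G : Type*} [Monoid G]
    (u : MonoidAlgebra R G) : Submodule R (MonoidAlgebra R G) :=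
  Submodule.span R (Set.range fun g : G => MonoidAlgebra.of R G g * u)

/-- The weight (support size) of an element of a group algebra. -/
def wt {R : Type*} [Semiring R] {G : Type*} (x : MonoidAlgebra R G) : ℕ :=
  x.coeff.support.card

/-- The minimum distance of the code generated by `u`: the least weight of a nonzero
element of the code. -/
def minDist {R : Type*} [CommSemiring R] {G : Type*} [Monoid G]
    (u : MonoidAlgebra R G) : ℕ :=
  sInf {n | ∃ x ∈ codeGen u, x ≠ 0 ∧ wt x = n}

/-- The group `C₄ᵐ × C₂`, written multiplicatively. -/
abbrev Gp (m : ℕ) : Type := Multiplicative ((Fin m → ZMod 4) × ZMod 2)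

/-- The generator `aᵢ` of the `i`-th copy of `C₄`. -/
def agen (m : ℕ) (i : Fin m) : Gp m := Multiplicative.ofAdd (Pi.single i 1, 0)

/-- The generator `h` of the `C₂` factor. -/
def hgen (m : ℕ) : Gp m := Multiplicative.ofAdd (0, 1)

/-- `u_m = ∏ᵢ (aᵢ + aᵢ² + aᵢ³)` in `𝔽₂[C₄ᵐ × C₂]`. -/
def um (m : ℕ) : MonoidAlgebra (ZMod 2) (Gp m) :=
  ∏ i : Fin m,
    (of (ZMod 2) (Gp m) (agen m i) + of (ZMod 2) (Gp m) (agen m i) ^ 2 +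
      of (ZMod 2) (Gp m) (agen m i) ^ 3)

/-- `u = 1 + h·u_m`. -/
def uu (m : ℕ) : MonoidAlgebra (ZMod 2) (Gp m) :=
  1 + of (ZMod 2) (Gp m) (hgen m) * um m

theorem LinearMap.finrank_range_eq_of_comp_self_eq_zero {K V : Type*} [DivisionRing K]
    [AddCommGroup V] [Module K V] [FiniteDimensional K V] {f : V →ₗ[K] V} (hf : f ∘ₗ f = 0)
    {W : Submodule K V} (hW : Disjoint W (ker f))
    (hV : Module.finrank K V = 2 * Module.finrank K W) :
    Module.finrank K (range f) = Module.finrank K W := by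
  have h_range_le : Module.finrank K (range f) ≤ Module.finrank K (ker f) :=
    Submodule.finrank_mono (range_le_ker_iff.mpr hf)
  have h_sup_inf := Submodule.finrank_sup_add_finrank_inf_eq W (ker f)
  rw [hW.eq_bot, finrank_bot] at h_sup_inf
  have h_sup_le := Submodule.finrank_le (W ⊔ ker f)
  have h_rank_nullity := f.finrank_range_add_finrank_ker
  omega

theorem CharTwo.self_add_sq_add_pow_three_sq_eq_one {R : Type*} [CommRing R] [CharP R 2] {a : R}
    (ha : a ^ 4 = 1) : (a + a ^ 2 + a ^ 3) ^ 2 = 1 := by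
  linear_combination (a ^ 2 + 1) * ha + (a ^ 2 + a ^ 3 + a ^ 4 + a ^ 5) * two_eq_zero (R := R)

open scoped Pointwise

theorem Subgroup.coe_mul_compl_subset {G : Type*} [Group G] (N : Subgroup G) :
    (N : Set G) * (N : Set G)ᶜ ⊆ (N : Set G)ᶜ := by
  rintro _ ⟨a, ha, b, hb, rfl⟩ hab
  exact hb (by simpa using N.mul_mem (N.inv_mem ha) hab)

namespace MonoidAlgebra

variable {k G : Type*}

instance charP [CommRing k] [Monoid G] (p : ℕ) [CharP k p] : CharP (MonoidAlgebra k G) p :=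
  charP_of_injective_algebraMap' k p

theorem mul_mem_supported [CommSemiring k] [Mul G] {s t u : Set G} (hstu : s * t ⊆ u)
    {x y : MonoidAlgebra k G} (hx : x ∈ supported k k s) (hy : y ∈ supported k k t) :
    x * y ∈ supported k k u := by
  classical
  intro g hg
  obtain ⟨a, ha, b, hb, rfl⟩ := Finset.mem_mul.mp (support_coeff_mul_subset x y hg)
  exact hstu (Set.mul_mem_mul (hx ha) (hy hb))

theorem of_mem_supported [CommSemiring k] [MulOneClass G] {s : Set G} {g : G} (hg : g ∈ s) :
    of k G g ∈ supported k k s :=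
  Finsupp.single_mem_supported k 1 hg

theorem disjoint_supported [CommSemiring k] {s t : Set G} (hst : Disjoint s t) :
    Disjoint (supported k k s) (supported k k t) := by
  rw [Submodule.disjoint_def]
  intro x hs ht
  rw [← coeff_eq_zero, ← Finsupp.support_eq_empty, ← Finset.coe_eq_empty]
  exact Set.subset_empty_iff.mp (hst (mem_supported.mp hs) (mem_supported.mp ht))

theorem finrank_supported [Field k] (s : Set G) [Finite s] :
    Module.finrank k (supported k k s) = Nat.card s := by
  have := Fintype.ofFinite s
  rw [(supportedEquivFinsupp s).finrank_eq, Module.finrank_finsupp_self,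
    Nat.card_eq_fintype_card]

theorem one_add_mul_self_eq_zero [CommRing k] [CharP k 2] [Monoid G] {w : MonoidAlgebra k G}
    (hww : w * w = 1) : (1 + w) * (1 + w) = 0 := by
  calc (1 + w) * (1 + w) = 1 + w * w + 2 * w := by noncomm_ring
    _ = 2 * (1 + w) := by rw [hww]; noncomm_ring
    _ = 0 := by rw [CharTwo.two_eq_zero, zero_mul]

theorem finrank_range_mulRight_one_add [Field k] [CharP k 2] [Group G] [Finite G]
    {N : Subgroup G} (hN : N.index = 2) {w : MonoidAlgebra k G}
    (hw : w ∈ supported k k (N : Set G)ᶜ) (hww : w * w = 1) :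
    Module.finrank k (LinearMap.range (LinearMap.mulRight k (1 + w))) = Nat.card N := by
  have h_sq : LinearMap.mulRight k (1 + w) ∘ₗ LinearMap.mulRight k (1 + w) = 0 := by
    rw [← LinearMap.mulRight_mul, one_add_mul_self_eq_zero hww, LinearMap.mulRight_zero_eq_zero]
  have h_disj : Disjoint (supported k k (N : Set G))
      (LinearMap.ker (LinearMap.mulRight k (1 + w))) := by
    rw [Submodule.disjoint_def]
    intro x hx hker
    have hx_eq : x = -(x * w) := by
      have h0 : x * (1 + w) = 0 := hker
      rw [mul_add, mul_one] at h0
      exact eq_neg_of_add_eq_zero_left h0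
    refine Submodule.disjoint_def.mp (disjoint_supported disjoint_compl_right) x hx ?_
    rw [hx_eq]
    exact Submodule.neg_mem _ (mul_mem_supported N.coe_mul_compl_subset hx hw)
  refine (LinearMap.finrank_range_eq_of_comp_self_eq_zero h_sq h_disj ?_).trans
    (finrank_supported _)
  rw [finrank_supported, Module.finrank_eq_nat_card_basis (basis G k), ← N.card_mul_index, hN,
    mul_comm]
  rfl

end MonoidAlgebra

def parity (m : ℕ) : Gp m →* Multiplicative (ZMod 2) := (AddMonoidHom.snd _ _).toMultiplicative

theorem index_ker_parity (m : ℕ) : (parity m).ker.index = 2 := by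
  rw [Subgroup.index_ker, MonoidHom.range_eq_top_of_surjective _ ?_, Subgroup.card_top]
  · simp [Nat.card_eq_fintype_card]
  · exact fun c => ⟨Multiplicative.ofAdd (0, Multiplicative.toAdd c), rfl⟩

theorem card_ker_parity (m : ℕ) : Nat.card (parity m).ker = 4 ^ m := by
  have h_card : Nat.card (Gp m) = 4 ^ m * 2 := by simp [Nat.card_eq_fintype_card]
  rw [← (parity m).ker.card_mul_index, index_ker_parity] at h_card
  omega

theorem agen_mem_ker_parity (m : ℕ) (i : Fin m) : agen m i ∈ (parity m).ker := rfl

theorem hgen_not_mem_ker_parity (m : ℕ) : hgen m ∉ (parity m).ker := by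
  rw [MonoidHom.mem_ker]
  show Multiplicative.ofAdd (1 : ZMod 2) ≠ 1
  decide

theorem agen_pow_four (m : ℕ) (i : Fin m) : agen m i ^ 4 = 1 := by
  rw [agen, ← ofAdd_nsmul, ← ofAdd_zero, Prod.smul_mk, ← Pi.single_smul]
  simp [show (4 : ZMod 4) = 0 from rfl]

theorem hgen_mul_self (m : ℕ) : hgen m * hgen m = 1 := by
  rw [hgen, ← ofAdd_add, ← ofAdd_zero]
  congr 1

theorem um_mem_supported_ker_parity (m : ℕ) :
    um m ∈ supported (ZMod 2) (ZMod 2) ((parity m).ker : Set (Gp m)) := by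
  refine Finset.prod_induction _ _ (fun _ _ => mul_mem_supported (coe_mul_coe _).le)
    (of_mem_supported (one_mem _)) fun i _ => ?_
  have h_pow (n : ℕ) := of_mem_supported (k := ZMod 2) (pow_mem (agen_mem_ker_parity m i) n)
  simp only [map_pow] at h_pow
  simpa using add_mem (add_mem (h_pow 1) (h_pow 2)) (h_pow 3)

theorem um_mul_self (m : ℕ) : um m * um m = 1 := by
  rw [← sq, um, ← Finset.prod_pow]
  refine Finset.prod_eq_one fun i _ => CharTwo.self_add_sq_add_pow_three_sq_eq_one ?_
  rw [← map_pow, agen_pow_four, map_one]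

theorem rank_of_u_general (m : ℕ) :
    Module.finrank (ZMod 2)
      (LinearMap.range (LinearMap.mulRight (ZMod 2) (uu m))) = 4 ^ m := by
  have hw : of (ZMod 2) (Gp m) (hgen m) * um m ∈
      supported (ZMod 2) (ZMod 2) ((parity m).ker : Set (Gp m))ᶜ := by
    rw [mul_comm]
    exact mul_mem_supported (parity m).ker.coe_mul_compl_subset (um_mem_supported_ker_parity m)
      (of_mem_supported (hgen_not_mem_ker_parity m))
  have hww : of (ZMod 2) (Gp m) (hgen m) * um m * (of (ZMod 2) (Gp m) (hgen m) * um m) = 1 := by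
    rw [mul_mul_mul_comm, ← map_mul, hgen_mul_self, um_mul_self, map_one, one_mul]
  rw [uu, finrank_range_mulRight_one_add (index_ker_parity m) hw hww, card_ker_parity]

theorem rank_of_u (m : ℕ) (hm : 1 ≤ m) :
    Module.finrank (ZMod 2)
      (LinearMap.range (LinearMap.mulRight (ZMod 2) (uu m))) = 4 ^ m :=
  rank_of_u_general m

end
end

section
/- Let q ≥ 1 and let U be a 4q × 4q matrix over a field such that U⁴ = 0 and the rank of U equals 3q. Then the rank of U³ equals q. -/
open Matrix LinearMap

lemma sylvester_rank_ineq {K : Type*} [Field K] {n : Type*} [Fintype n] [DecidableEq n]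
    (A B : Matrix n n K) :
    A.rank + B.rank ≤ Fintype.card n + (A * B).rank := by
  set f := A.mulVecLin with hf
  set g := B.mulVecLin with hg
  set h := f.domRestrict (LinearMap.range g) with hh
  have hrange : LinearMap.range h = LinearMap.range (f ∘ₗ g) := by
    rw [hh, LinearMap.range_domRestrict, LinearMap.range_comp]
  have e1 : Module.finrank K (LinearMap.range h) + Module.finrank K (LinearMap.ker h)
      = Module.finrank K (LinearMap.range g) := by
    exact h.finrank_range_add_finrank_ker
  have e2 : Module.finrank K (LinearMap.ker h) ≤ Module.finrank K (LinearMap.ker f) := by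
    have hle : Submodule.map (LinearMap.range g).subtype (LinearMap.ker h)
        ≤ LinearMap.ker f := by
      rintro x ⟨y, hy, rfl⟩
      simpa [hh, LinearMap.mem_ker] using hy
    calc Module.finrank K (LinearMap.ker h)
        = Module.finrank K (Submodule.map (LinearMap.range g).subtype (LinearMap.ker h)) :=
          (Submodule.equivMapOfInjective _ (Submodule.injective_subtype _) _).finrank_eq
      _ ≤ Module.finrank K (LinearMap.ker f) := Submodule.finrank_mono hle
  have e3 : Module.finrank K (LinearMap.range f) + Module.finrank K (LinearMap.ker f)
      = Fintype.card n := by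
    rw [f.finrank_range_add_finrank_ker, Module.finrank_fintype_fun_eq_card]
  have hAB : (A * B).rank = Module.finrank K (LinearMap.range h) := by
    rw [hrange, Matrix.rank, Matrix.mulVecLin_mul]
  have hA : A.rank = Module.finrank K (LinearMap.range f) := rfl
  have hB : B.rank = Module.finrank K (LinearMap.range g) := rfl
  omega

theorem rank_of_cube {K : Type*} [Field K] (q : ℕ) (hq : 1 ≤ q)
    (U : Matrix (Fin (4 * q)) (Fin (4 * q)) K)
    (hU4 : U ^ 4 = 0) (hrank : U.rank = 3 * q) :
    (U ^ 3).rank = q := by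
  have hcard : Fintype.card (Fin (4 * q)) = 4 * q := Fintype.card_fin _
  have hmul : U * U ^ 3 = 0 := by rw [← pow_succ']; exact hU4
  have hupper := Matrix.rank_add_rank_le_card_of_mul_eq_zero hmul
  have h2 := sylvester_rank_ineq U U
  have h3 := sylvester_rank_ineq (U * U) (U)
  have hUU : U * U = U ^ 2 := (sq U).symm
  have hUUU : U ^ 2 * U = U ^ 3 := (pow_succ U 2).symm
  rw [hUU, hUUU] at h3
  rw [hUU] at h2
  omega
end

section
/- Let n ≥ 1 and let D be a finite set of residues modulo n. In the group algebra 𝔽₂[D₂ₙ] of the dihedral group of order 2n, let u = 1 + Σ_{j∈D} (sr j), where sr j denotes the reflection elements. Suppose that |D| is odd and that for every nonzero x ∈ ℤ/nℤ the number of ordered pairs (j, k) ∈ D × D with j − k = x is even. Then u² = 0. -/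
noncomputable section

open MonoidAlgebra

theorem dihedral_u_sq_zero (n : ℕ) (hn : 1 ≤ n) (D : Finset (ZMod n))
    (hodd : Odd D.card)
    (heven : ∀ x : ZMod n, x ≠ 0 →
      Even (((D ×ˢ D).filter fun p => p.1 - p.2 = x).card)) :
    (1 + ∑ j ∈ D,
        MonoidAlgebra.of (ZMod 2) (DihedralGroup n) (DihedralGroup.sr j)) ^ 2 = 0 := by
  haveI : NeZero n := ⟨by omega⟩
  set S := ∑ j ∈ D, MonoidAlgebra.of (ZMod 2) (DihedralGroup n) (DihedralGroup.sr j) with hS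
  have h2 : (2 : ZMod 2) = 0 := rfl
  have hchar : ∀ a : MonoidAlgebra (ZMod 2) (DihedralGroup n), a + a = 0 := by
    intro a
    calc a + a = (2 : ZMod 2) • a := (two_smul _ a).symm
    _ = 0 := by rw [h2, zero_smul]
  have hSS : S * S = 1 := by
    rw [hS, Finset.sum_mul_sum]
    calc ∑ j ∈ D, ∑ k ∈ D,
          MonoidAlgebra.of (ZMod 2) (DihedralGroup n) (DihedralGroup.sr j) *
          MonoidAlgebra.of (ZMod 2) (DihedralGroup n) (DihedralGroup.sr k)
        = ∑ p ∈ D ×ˢ D,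
          MonoidAlgebra.of (ZMod 2) (DihedralGroup n) (DihedralGroup.r (p.2 - p.1)) := by
          rw [← Finset.sum_product']
          exact Finset.sum_congr rfl fun p _ => by rw [← map_mul]; rfl
      _ = ∑ x : ZMod n, ∑ p ∈ (D ×ˢ D).filter (fun p : ZMod n × ZMod n => p.2 - p.1 = x),
          MonoidAlgebra.of (ZMod 2) (DihedralGroup n) (DihedralGroup.r (p.2 - p.1)) :=
          (Finset.sum_fiberwise (D ×ˢ D) (fun p : ZMod n × ZMod n => p.2 - p.1) _).symm
      _ = ∑ x : ZMod n,
          ((((D ×ˢ D).filter (fun p : ZMod n × ZMod n => p.2 - p.1 = x)).card : ZMod 2) •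
            MonoidAlgebra.of (ZMod 2) (DihedralGroup n) (DihedralGroup.r x)) := by
          refine Finset.sum_congr rfl fun x _ => ?_
          rw [Finset.sum_congr rfl (fun p hp => by
            rw [(Finset.mem_filter.mp hp).2] :
            ∀ p ∈ (D ×ˢ D).filter (fun p : ZMod n × ZMod n => p.2 - p.1 = x),
              MonoidAlgebra.of (ZMod 2) (DihedralGroup n) (DihedralGroup.r (p.2 - p.1)) =
              MonoidAlgebra.of (ZMod 2) (DihedralGroup n) (DihedralGroup.r x))]
          rw [Finset.sum_const, ← Nat.cast_smul_eq_nsmul (ZMod 2)]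
      _ = 1 := by
          rw [Finset.sum_eq_single 0]
          · have hdiag : ((D ×ˢ D).filter (fun p : ZMod n × ZMod n => p.2 - p.1 = 0))
                = D.diag := by
              ext p
              simp only [Finset.mem_filter, Finset.mem_product, Finset.mem_diag, sub_eq_zero]
              constructor
              · rintro ⟨⟨h1, _⟩, h3⟩; exact ⟨h1, h3.symm⟩
              · rintro ⟨h1, hp⟩; exact ⟨⟨h1, hp ▸ h1⟩, hp.symm⟩
            rw [hdiag, Finset.diag_card]
            obtain ⟨k, hk⟩ := hodd
            have hc : ((D.card : ZMod 2)) = 1 := by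
              rw [hk]; push_cast; rw [h2]; ring
            rw [hc, one_smul]
            rfl
          · intro x _ hx
            have hfil : ((D ×ˢ D).filter (fun p : ZMod n × ZMod n => p.2 - p.1 = x)) =
                ((D ×ˢ D).filter (fun p : ZMod n × ZMod n => p.1 - p.2 = -x)) := by
              apply Finset.filter_congr
              intro p _
              constructor <;> intro h <;> linear_combination -h
            have he := heven (-x) (by simpa using hx)
            have : ((((D ×ˢ D).filter
                (fun p : ZMod n × ZMod n => p.2 - p.1 = x)).card : ZMod 2)) = 0 := by
              rw [hfil, ZMod.natCast_eq_zero_iff]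
              exact he.two_dvd
            rw [this, zero_smul]
          · intro h
            exact absurd (Finset.mem_univ 0) h
  have hexp : (1 + S) ^ 2 = 1 + S + (S + S * S) := by
    rw [sq, add_mul, one_mul, mul_add, mul_one]
  rw [hexp, hSS]
  have : (1 : MonoidAlgebra (ZMod 2) (DihedralGroup n)) + S + (S + 1) = (1 + 1) + (S + S) := by
    abel
  rw [this, hchar, hchar, add_zero]
end
end
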